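/- arXiv:1911.00351 — 7 statements merged into one kernel-verified Lean document; each statement's English description precedes it below -/
import Mathlib

section
/- Fix constants B > 0, D > 0 and u₂ > 1. Define f : (0,∞) → ℝ by f(t) = t + (2^{D/(B t)} − 1)·t/u₂. Suppose x ≥ 0 satisfies x·e^x = (u₂ − 1)/e, and set t* = (ln 2)·D / (B·(x + 1)). Then t* is a global minimizer of f on (0,∞), i.e., for every t > 0, f(t*) ≤ f(t). -/
/-!
Substituting `s = (ln 2) D / (B t)` and `c = (ln 2) D / B`, one has `u₂ f(t) = t (u₂ - 1 + e^s)`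
with `t s = c`. Since `u₂ - 1 = x e^{x+1}`, the inequality `f(t*) ≤ f(t)` becomes
`s e^{x+1} ≤ x e^{x+1} + e^s`, which is the tangent line inequality of `exp` at `x + 1`;
equality holds at `s = x + 1`, i.e. at `t = t*`.
-/

open Real

noncomputable def energy (B D u t : ℝ) : ℝ :=
  t + ((2 : ℝ) ^ (D / (B * t)) - 1) * t / u

lemma energy_eq {u : ℝ} (hu : u ≠ 0) (B D t : ℝ) :
    energy B D u t = t * (u - 1 + exp (log 2 * D / B / t)) / u := by
  have h_rpow : (2 : ℝ) ^ (D / (B * t)) = exp (log 2 * D / B / t) := by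
    rw [rpow_def_of_pos two_pos]
    ring_nf
  rw [energy, h_rpow]
  field_simp
  ring

lemma exp_mul_sub_add_one_le_exp (a s : ℝ) : exp a * (s - a + 1) ≤ exp s :=
  calc exp a * (s - a + 1) ≤ exp a * exp (s - a) := by
        gcongr
        linarith [add_one_le_exp (s - a)]
    _ = exp s := by rw [← exp_add, add_sub_cancel]

lemma mul_exp_le_mul_add_exp_div (x c : ℝ) {t : ℝ} (ht : 0 < t) :
    c * exp (x + 1) ≤ t * (x * exp (x + 1) + exp (c / t)) := by
  have h_tangent := exp_mul_sub_add_one_le_exp (x + 1) (c / t)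
  calc c * exp (x + 1) = t * (exp (x + 1) * (c / t - (x + 1) + 1)) + t * (x * exp (x + 1)) := by
        field_simp
        ring
    _ ≤ t * exp (c / t) + t * (x * exp (x + 1)) := by gcongr
    _ = t * (x * exp (x + 1) + exp (c / t)) := by ring

lemma div_mul_add_exp_div_div {x c : ℝ} (hx : x + 1 ≠ 0) (hc : c ≠ 0) :
    c / (x + 1) * (x * exp (x + 1) + exp (c / (c / (x + 1)))) = c * exp (x + 1) := by
  rw [div_div_cancel₀ hc]
  field_simp

theorem stmt_0 (B D u₂ x : ℝ) (hB : 0 < B) (hD : 0 < D) (hu : 1 < u₂)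
    (hx : 0 ≤ x) (hxe : x * Real.exp x = (u₂ - 1) / Real.exp 1) :
    ∀ t > 0,
      (Real.log 2 * D / (B * (x + 1)))
          + ((2 : ℝ) ^ (D / (B * (Real.log 2 * D / (B * (x + 1))))) - 1)
            * (Real.log 2 * D / (B * (x + 1))) / u₂
        ≤ t + ((2 : ℝ) ^ (D / (B * t)) - 1) * t / u₂ := by
  intro t ht
  have hu₂ : 0 < u₂ := by linarith
  have h_lambert : u₂ - 1 = x * exp (x + 1) := by
    rw [exp_add, ← mul_assoc, hxe, div_mul_cancel₀ _ (exp_pos 1).ne']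
  have hc : log 2 * D / B ≠ 0 := by positivity
  change energy B D u₂ (log 2 * D / (B * (x + 1))) ≤ energy B D u₂ t
  rw [← div_div, energy_eq hu₂.ne', energy_eq hu₂.ne', h_lambert,
    div_mul_add_exp_div_div (by linarith) hc]
  gcongr ?_ / _
  exact mul_exp_le_mul_add_exp_div x _ ht
end

section
/- Fix constants B > 0, D > 0 and u₂ > 1, and let f(t) = t + (2^{D/(B t)} − 1)·t/u₂. If x ≥ 0 satisfies x·e^x = (u₂ − 1)/e, then t* = (ln 2)·D/(B·(x + 1)) is a stationary point of f: the derivative of f at t* equals 0. -/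
/-!
For `t ≠ 0`, `f'(t) = 1 + (2^{c/t} (1 - c log 2 / t) - 1) / u₂` with `c = D / B`. At `t₀` the
exponent `c log 2 / t₀` is `x + 1`, so `2^{c/t₀} = e^{x+1}`, and the Lambert relation in the form
`x e^{x+1} = u₂ - 1` turns the numerator into `-u₂`.
-/

open Real

theorem hasDerivAt_rpow_div_sub_one_mul {a : ℝ} (c : ℝ) {t : ℝ} (ha : 0 < a) (ht : t ≠ 0) :
    HasDerivAt (fun s : ℝ => (a ^ (c / s) - 1) * s)
      (a ^ (c / t) * (1 - log a * c / t) - 1) t := by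
  have hquot : HasDerivAt (fun s : ℝ => c / s) (-(c / t ^ 2)) t := by
    simpa [div_eq_mul_inv] using (hasDerivAt_inv ht).const_mul c
  refine (((hquot.const_rpow ha).sub_const 1).mul (hasDerivAt_id' t)).congr_deriv ?_
  field_simp
  ring

theorem hasDerivAt_add_rpow_div_sub_one_mul_div {a : ℝ} (c u : ℝ) {t : ℝ} (ha : 0 < a)
    (ht : t ≠ 0) :
    HasDerivAt (fun s : ℝ => s + (a ^ (c / s) - 1) * s / u)
      (1 + (a ^ (c / t) * (1 - log a * c / t) - 1) / u) t :=
  (hasDerivAt_id t).add ((hasDerivAt_rpow_div_sub_one_mul c ha ht).div_const u)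

theorem stmt_4 (B D u₂ x : ℝ) (hB : 0 < B) (hD : 0 < D) (hu : 1 < u₂)
    (hx : 0 ≤ x) (hxe : x * Real.exp x = (u₂ - 1) / Real.exp 1) :
    deriv (fun t : ℝ => t + ((2 : ℝ) ^ (D / (B * t)) - 1) * t / u₂)
        (Real.log 2 * D / (B * (x + 1))) = 0 := by
  set t₀ := log 2 * D / (B * (x + 1))
  have hlog2 : log 2 ≠ 0 := (log_pos one_lt_two).ne'
  have hx₁ : x + 1 ≠ 0 := by positivity
  have ht₀ : t₀ ≠ 0 := div_ne_zero (mul_ne_zero hlog2 hD.ne') (mul_ne_zero hB.ne' hx₁)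
  have hexponent : log 2 * (D / B) / t₀ = x + 1 := by
    simp only [t₀]
    field_simp
  have hlambert : x * exp (x + 1) = u₂ - 1 := by
    rw [exp_add, ← mul_assoc, hxe, div_mul_cancel₀ _ (exp_pos 1).ne']
  simp only [← div_div]
  rw [(hasDerivAt_add_rpow_div_sub_one_mul_div (D / B) u₂ two_pos ht₀).deriv,
    rpow_def_of_pos two_pos, ← mul_div_assoc, hexponent]
  field_simp [(by linarith : u₂ ≠ 0)]
  linear_combination -hlambert
end

section
/- Let δ ≥ 0, B > 0, D > 0, C₁ > 0, C₂ > 0 and C₃ ∈ ℝ, and assume C₁·(ln 2)·D/B ≥ C₂·δ. Then the function g(t) = (2^{D/(B(t−δ))} − 1)·C₁ − C₂·t/(t−δ) + C₃ is strictly decreasing on the interval (δ, ∞). -/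
/-!
With `s = (t - δ)⁻¹` and `κ = ln 2 · D / B`, the function equals
`C₁ e^{κ s} - C₂ δ s + (C₃ - C₁ - C₂)`. Since `e^{κ s}` has slope greater than `κ` on `s > 0`,
the hypothesis `C₂ δ ≤ C₁ κ` makes this strictly increasing in `s`, and `s` is strictly
decreasing in `t` on `(δ, ∞)`.
-/

open Real Set

theorem Real.sub_lt_exp_sub_exp {a b : ℝ} (ha : 0 ≤ a) (hab : a < b) :
    b - a < exp b - exp a := by
  have htangent : b - a + 1 < exp (b - a) := add_one_lt_exp (sub_ne_zero.mpr hab.ne')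
  calc b - a ≤ exp a * (b - a) := le_mul_of_one_le_left (sub_nonneg.mpr hab.le) (one_le_exp ha)
    _ < exp a * (exp (b - a) - 1) := mul_lt_mul_of_pos_left (by linarith) (exp_pos a)
    _ = exp b - exp a := by rw [mul_sub, ← exp_add, add_sub_cancel, mul_one]

theorem strictMonoOn_mul_exp_mul_sub_mul {C κ c : ℝ} (hC : 0 < C) (hκ : 0 < κ)
    (hc : c ≤ C * κ) : StrictMonoOn (fun s ↦ C * exp (κ * s) - c * s) (Ici 0) := by
  intro a ha b _ hab
  have hexp : κ * b - κ * a < exp (κ * b) - exp (κ * a) :=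
    sub_lt_exp_sub_exp (mul_nonneg hκ.le ha) (by gcongr)
  have hlin : c * (b - a) ≤ C * (κ * b - κ * a) := by
    rw [← mul_sub, ← mul_assoc]
    exact mul_le_mul_of_nonneg_right hc (sub_nonneg.mpr hab.le)
  have : C * (κ * b - κ * a) < C * (exp (κ * b) - exp (κ * a)) := by gcongr
  dsimp only
  linarith

theorem stmt_5_general (δ B D C₁ C₂ C₃ : ℝ) (hB : 0 < B) (hD : 0 < D)
    (hC₁ : 0 < C₁) (hcond : C₂ * δ ≤ C₁ * (Real.log 2) * D / B) :
    StrictAntiOn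
      (fun t : ℝ => ((2 : ℝ) ^ (D / (B * (t - δ))) - 1) * C₁ - C₂ * t / (t - δ) + C₃)
      (Set.Ioi δ) := by
  set κ := log 2 * D / B
  have hκ : 0 < κ := by have := log_pos one_lt_two; positivity
  have hφ := strictMonoOn_mul_exp_mul_sub_mul hC₁ hκ (c := C₂ * δ)
    (by rwa [mul_assoc, mul_div_assoc] at hcond)
  have hinv : StrictAntiOn (fun t : ℝ ↦ (t - δ)⁻¹) (Ioi δ) := fun x hx y _ hxy ↦
    inv_strictAnti₀ (sub_pos.mpr (mem_Ioi.mp hx)) (by linarith)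
  have hmaps : MapsTo (fun t : ℝ ↦ (t - δ)⁻¹) (Ioi δ) (Ici 0) := fun _ ht ↦
    mem_Ici.mpr (inv_nonneg.mpr (sub_nonneg.mpr (le_of_lt ht)))
  refine ((strictMono_id.add_const (C₃ - C₁ - C₂)).comp_strictAntiOn
    (hφ.comp_strictAntiOn hinv hmaps)).congr fun t ht ↦ ?_
  have ht : t - δ ≠ 0 := (sub_pos.mpr ht).ne'
  simp only [Function.comp, id, rpow_def_of_pos two_pos, κ]
  field_simp
  ring

theorem stmt_5 (δ B D C₁ C₂ C₃ : ℝ) (hδ : 0 ≤ δ) (hB : 0 < B) (hD : 0 < D)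
    (hC₁ : 0 < C₁) (hC₂ : 0 < C₂) (hcond : C₂ * δ ≤ C₁ * (Real.log 2) * D / B) :
    StrictAntiOn
      (fun t : ℝ => ((2 : ℝ) ^ (D / (B * (t - δ))) - 1) * C₁ - C₂ * t / (t - δ) + C₃)
      (Set.Ioi δ) :=
  stmt_5_general δ B D C₁ C₂ C₃ hB hD hC₁ hcond
end

section
/- Let δ ≥ 0, B > 0, D > 0, C₁ > 0, C₂ > 0 and C₃ ∈ ℝ with C₁·(ln 2)·D/B ≥ C₂·δ and C₃ < C₂. Then there exists a unique t ∈ (δ, ∞) satisfying (2^{D/(B(t−δ))} − 1)·C₁ − C₂·t/(t−δ) + C₃ = 0. -/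
theorem stmt_6 (δ B D C₁ C₂ C₃ : ℝ) (hδ : 0 ≤ δ) (hB : 0 < B) (hD : 0 < D)
    (hC₁ : 0 < C₁) (hC₂ : 0 < C₂) (hcond : C₂ * δ ≤ C₁ * (Real.log 2) * D / B)
    (hC₃ : C₃ < C₂) :
    ∃! t : ℝ, t ∈ Set.Ioi δ ∧
      ((2 : ℝ) ^ (D / (B * (t - δ))) - 1) * C₁ - C₂ * t / (t - δ) + C₃ = 0 := by
  have hlog2 : 0 < Real.log 2 := Real.log_pos (by norm_num)
  set a : ℝ := Real.log 2 * D / B with ha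
  have ha0 : 0 < a := by positivity
  have hCa : C₂ * δ ≤ C₁ * a := by
    calc C₂ * δ ≤ C₁ * Real.log 2 * D / B := hcond
      _ = C₁ * a := by rw [ha]; ring
  set G : ℝ → ℝ := fun s => C₁ * (Real.exp (a * s) - 1) - C₂ * δ * s + (C₃ - C₂) with hG
  have hGc : Continuous G := by fun_prop
  have key : ∀ t : ℝ, δ < t →
      ((2 : ℝ) ^ (D / (B * (t - δ))) - 1) * C₁ - C₂ * t / (t - δ) + C₃ = G (1 / (t - δ)) := by
    intro t ht
    have hu : (0:ℝ) < t - δ := sub_pos.mpr ht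
    have hu' : t - δ ≠ 0 := ne_of_gt hu
    rw [show (2:ℝ) ^ (D / (B * (t - δ))) = Real.exp (Real.log 2 * (D / (B * (t - δ)))) from
      Real.rpow_def_of_pos (by norm_num) _]
    have harg : Real.log 2 * (D / (B * (t - δ))) = a * (1 / (t - δ)) := by
      rw [ha]; field_simp
    rw [harg]
    simp only [hG]
    field_simp
    ring
  have hmono : ∀ s₁ s₂ : ℝ, 0 < s₁ → s₁ < s₂ → G s₁ < G s₂ := by
    intro s₁ s₂ hs₁ h12
    have h1 : 1 + a * s₁ ≤ Real.exp (a * s₁) := by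
      have := Real.add_one_le_exp (a * s₁); linarith
    have h2 : a * (s₂ - s₁) + 1 < Real.exp (a * (s₂ - s₁)) :=
      Real.add_one_lt_exp (mul_pos ha0 (sub_pos.mpr h12)).ne'
    have h3 : Real.exp (a * s₂) = Real.exp (a * s₁) * Real.exp (a * (s₂ - s₁)) := by
      rw [← Real.exp_add]; ring_nf
    simp only [hG]
    have hE1 : 0 < Real.exp (a * s₁) := Real.exp_pos _
    have has1 : 0 < a * s₁ := by positivity
    have hΔ : 0 < a * (s₂ - s₁) := mul_pos ha0 (sub_pos.mpr h12)
    have k1 : Real.exp (a * s₁) * (a * (s₂ - s₁) + 1) < Real.exp (a * s₂) := by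
      rw [h3]; exact mul_lt_mul_of_pos_left h2 hE1
    have k2 : a * (s₂ - s₁) ≤ Real.exp (a * s₁) * (a * (s₂ - s₁)) := by nlinarith
    have k3 : a * (s₂ - s₁) < Real.exp (a * s₂) - Real.exp (a * s₁) := by nlinarith
    nlinarith [mul_lt_mul_of_pos_left k3 hC₁,
      mul_le_mul_of_nonneg_right hCa (sub_nonneg.mpr h12.le)]
  -- a positive point
  obtain ⟨sP, hsP0, hsPpos⟩ : ∃ s : ℝ, 0 < s ∧ 0 < G s := by
    set r : ℝ := (C₂ - C₃) / C₁ with hr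
    have hr0 : 0 ≤ r := div_nonneg (by linarith) hC₁.le
    set x : ℝ := 2 * Real.sqrt r + 1 with hx
    have hsq : 0 ≤ Real.sqrt r := Real.sqrt_nonneg r
    have hx0 : 0 < x := by positivity
    refine ⟨x / a, div_pos hx0 ha0, ?_⟩
    have hxx : a * (x / a) = x := by field_simp
    have hhalf : 1 + x / 2 ≤ Real.exp (x / 2) := by
      have := Real.add_one_le_exp (x / 2); linarith
    have hsq2 : Real.exp x = Real.exp (x / 2) ^ 2 := by
      rw [sq, ← Real.exp_add]; norm_num
    have hquad : (1 + x / 2) ^ 2 ≤ Real.exp x := by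
      rw [hsq2]
      have h05 : 0 ≤ 1 + x / 2 := by linarith
      nlinarith [hhalf]
    have hδterm : C₂ * δ * (x / a) ≤ C₁ * x := by
      have : C₂ * δ * (x / a) ≤ C₁ * a * (x / a) := by
        apply mul_le_mul_of_nonneg_right hCa; positivity
      calc C₂ * δ * (x / a) ≤ C₁ * a * (x / a) := this
        _ = C₁ * x := by field_simp
    have hrsq : Real.sqrt r ^ 2 = r := Real.sq_sqrt hr0
    have hrC : C₁ * r = C₂ - C₃ := by rw [hr]; field_simp
    simp only [hG, hxx]
    nlinarith [hquad, hδterm, hrsq, hrC, mul_pos hC₁ hx0, sq_nonneg (Real.sqrt r)]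
  -- a negative point
  obtain ⟨sN, hsN0, hsNneg⟩ : ∃ s : ℝ, 0 < s ∧ G s < 0 := by
    have hG0 : G 0 < 0 := by simp [hG]; linarith
    have hten : Filter.Tendsto G (nhds 0) (nhds (G 0)) := hGc.continuousAt
    have hev : ∀ᶠ s in nhds (0:ℝ), G s < 0 := hten.eventually (Filter.Tendsto.eventually_lt_const hG0 Filter.tendsto_id)
    have hev' : ∀ᶠ s in nhdsWithin (0:ℝ) (Set.Ioi 0), G s < 0 :=
      Filter.Eventually.filter_mono nhdsWithin_le_nhds hev
    have := (hev'.and self_mem_nhdsWithin).exists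
    obtain ⟨s, hs1, hs2⟩ := this
    exact ⟨s, hs2, hs1⟩
  have hNP : sN < sP := by
    by_contra h
    push_neg at h
    rcases eq_or_lt_of_le h with h | h
    · rw [h] at hsPpos; linarith
    · have := hmono sP sN hsP0 h; linarith
  obtain ⟨s, hsIcc, hs0⟩ : ∃ s ∈ Set.Icc sN sP, G s = 0 := by
    have := intermediate_value_Icc (le_of_lt hNP) (hGc.continuousOn)
    have h0mem : (0:ℝ) ∈ Set.Icc (G sN) (G sP) := ⟨le_of_lt hsNneg, le_of_lt hsPpos⟩
    obtain ⟨s, hs, hval⟩ := this h0mem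
    exact ⟨s, hs, hval⟩
  have hspos : 0 < s := lt_of_lt_of_le hsN0 hsIcc.1
  refine ⟨δ + 1 / s, ⟨?_, ?_⟩, ?_⟩
  · simp only [Set.mem_Ioi]
    have h1s : 0 < 1 / s := by positivity
    linarith
  · have h1s : 0 < 1 / s := by positivity
    have ht : δ < δ + 1 / s := by linarith
    rw [key _ ht]
    have he : (1:ℝ) / (δ + 1 / s - δ) = s := by
      rw [show δ + 1 / s - δ = 1 / s by ring, one_div_one_div]
    rw [he, hs0]
  · rintro t' ⟨ht', heq⟩
    simp only [Set.mem_Ioi] at ht'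
    rw [key _ ht'] at heq
    have hu' : 0 < 1 / (t' - δ) := by
      have := sub_pos.mpr ht'; positivity
    have heqs : (1:ℝ) / (t' - δ) = s := by
      rcases lt_trichotomy (1 / (t' - δ)) s with h | h | h
      · have := hmono _ _ hu' h; rw [heq, hs0] at this; linarith
      · exact h
      · have := hmono _ _ hspos h; rw [heq, hs0] at this; linarith
    have ht'δ : t' - δ ≠ 0 := ne_of_gt (sub_pos.mpr ht')
    have hsne : s ≠ 0 := ne_of_gt hspos
    have : t' - δ = 1 / s := by
      field_simp at heqs ⊢
      linarith [heqs]
    linarith [this]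
end

section
/- For every real constant c, the function (A, v) ↦ √(1 + A² + c²·v⁴) is convex on ℝ × ℝ. -/
/-! The function is `√(φ(A)² + ψ(v)²)` with `φ(A) = √(1 + A²)` and `ψ(v) = |c| v²`, both convex
and nonnegative. The Euclidean norm of a pair of nonnegative convex functions is convex: the norm
is convex on `ℝ²` and, on the nonnegative quadrant, monotone in each coordinate. -/

open Real

lemma sqrt_sq_add_sq_eq_norm (a b : ℝ) : √(a ^ 2 + b ^ 2) = ‖!₂[a, b]‖ := by
  simp [EuclideanSpace.norm_eq, Fin.sum_univ_two]

theorem ConvexOn.sqrt_sq_add_sq {E : Type*} [AddCommMonoid E] [Module ℝ E] {s : Set E}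
    {f g : E → ℝ} (hf : ConvexOn ℝ s f) (hg : ConvexOn ℝ s g)
    (hf₀ : ∀ x ∈ s, 0 ≤ f x) (hg₀ : ∀ x ∈ s, 0 ≤ g x) :
    ConvexOn ℝ s (fun x => √(f x ^ 2 + g x ^ 2)) := by
  refine ⟨hf.1, fun x hx y hy a b ha hb hab => ?_⟩
  have hz : a • x + b • y ∈ s := hf.1 hx hy ha hb hab
  calc √(f (a • x + b • y) ^ 2 + g (a • x + b • y) ^ 2)
      ≤ √((a * f x + b * f y) ^ 2 + (a * g x + b * g y) ^ 2) := by
        gcongr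
        · exact hf₀ _ hz
        · exact hf.2 hx hy ha hb hab
        · exact hg₀ _ hz
        · exact hg.2 hx hy ha hb hab
    _ = ‖a • !₂[f x, g x] + b • !₂[f y, g y]‖ := by
        rw [sqrt_sq_add_sq_eq_norm]
        congr 1
        ext i
        fin_cases i <;> simp
    _ ≤ a * ‖!₂[f x, g x]‖ + b * ‖!₂[f y, g y]‖ :=
        (convexOn_norm convex_univ).2 trivial trivial ha hb hab
    _ = a * √(f x ^ 2 + g x ^ 2) + b * √(f y ^ 2 + g y ^ 2) := by
        rw [sqrt_sq_add_sq_eq_norm, sqrt_sq_add_sq_eq_norm]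

theorem stmt_11 (c : ℝ) :
    ConvexOn ℝ (Set.univ : Set (ℝ × ℝ))
      (fun p : ℝ × ℝ => Real.sqrt (1 + p.1 ^ 2 + c ^ 2 * p.2 ^ 4)) := by
  have habs : ConvexOn ℝ Set.univ (fun p : ℝ × ℝ => |p.1|) :=
    (convexOn_norm convex_univ).comp_linearMap (LinearMap.fst ℝ ℝ ℝ)
  have hφ : ConvexOn ℝ Set.univ (fun p : ℝ × ℝ => √(1 ^ 2 + |p.1| ^ 2)) :=
    (convexOn_const 1 convex_univ).sqrt_sq_add_sq habs (fun _ _ => zero_le_one)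
      (fun _ _ => abs_nonneg _)
  have hψ : ConvexOn ℝ Set.univ (fun p : ℝ × ℝ => |c| * p.2 ^ 2) :=
    ((even_two.convexOn_pow (𝕜 := ℝ)).comp_linearMap (LinearMap.snd ℝ ℝ ℝ)).smul (abs_nonneg c)
  refine (hφ.sqrt_sq_add_sq hψ (fun _ _ => sqrt_nonneg _) fun _ _ => by positivity).congr
    fun p _ => ?_
  dsimp only
  rw [sq_sqrt (by positivity), mul_pow, sq_abs, sq_abs]
  congr 1
  ring
end

section
/- Let a_max > 0, V_max > 0 and 0 < d ≤ V_max²/a_max, and set T = 2·√(d/a_max). Then there exists a differentiable function q : ℝ → ℝ such that q(0) = 0, q(T) = d, q′(0) = 0, q′(T) = 0, |q′(t)| ≤ V_max for all t ∈ [0, T], and q′ is Lipschitz on [0, T] with Lipschitz constant a_max. -/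
open Set

theorem hasDerivAt_mul_abs (x : ℝ) : HasDerivAt (fun y => y * |y|) (2 * |x|) x := by
  rcases eq_or_ne x 0 with rfl | hx
  · rw [hasDerivAt_iff_isLittleO_nhds_zero]
    refine (Asymptotics.isBigO_of_le _ fun h => ?_).trans_isLittleO
      (Asymptotics.isLittleO_pow_id (𝕜 := ℝ) one_lt_two)
    simp [sq]
  · refine ((hasDerivAt_id' x).mul (hasDerivAt_abs hx)).congr_deriv ?_
    rw [self_mul_sign]
    ring

/-- Since `(t - m) * |t - m|` is an antiderivative of `2 * |t - m|`, the speed is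
`a * (m - |t - m|)`: acceleration `a` up to time `m`, deceleration `a` afterwards. -/
noncomputable def triangularProfile (a m t : ℝ) : ℝ :=
  a * (m * t - ((t - m) * |t - m| + m ^ 2) / 2)

section triangularProfile

variable {a m : ℝ}

theorem hasDerivAt_triangularProfile (a m t : ℝ) :
    HasDerivAt (triangularProfile a m) (a * (m - |t - m|)) t := by
  have h := (hasDerivAt_mul_abs (t - m)).comp t ((hasDerivAt_id' t).sub_const m)
  refine ((((hasDerivAt_id' t).const_mul m).sub
    ((h.add_const (m ^ 2)).div_const 2)).const_mul a).congr_deriv ?_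
  ring

theorem differentiable_triangularProfile (a m : ℝ) : Differentiable ℝ (triangularProfile a m) :=
  fun t => (hasDerivAt_triangularProfile a m t).differentiableAt

theorem deriv_triangularProfile (a m t : ℝ) :
    deriv (triangularProfile a m) t = a * (m - |t - m|) :=
  (hasDerivAt_triangularProfile a m t).deriv

theorem triangularProfile_zero (hm : 0 ≤ m) : triangularProfile a m 0 = 0 := by
  rw [triangularProfile, zero_sub, abs_neg, abs_of_nonneg hm]
  ring

theorem triangularProfile_two_mul (hm : 0 ≤ m) : triangularProfile a m (2 * m) = a * m ^ 2 := by
  rw [triangularProfile, show 2 * m - m = m by ring, abs_of_nonneg hm]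
  ring

theorem deriv_triangularProfile_zero (hm : 0 ≤ m) : deriv (triangularProfile a m) 0 = 0 := by
  rw [deriv_triangularProfile, zero_sub, abs_neg, abs_of_nonneg hm, sub_self, mul_zero]

theorem deriv_triangularProfile_two_mul (hm : 0 ≤ m) :
    deriv (triangularProfile a m) (2 * m) = 0 := by
  rw [deriv_triangularProfile, show 2 * m - m = m by ring, abs_of_nonneg hm, sub_self, mul_zero]

theorem abs_deriv_triangularProfile_le (ha : 0 ≤ a) {t : ℝ} (ht : t ∈ Icc 0 (2 * m)) :
    |deriv (triangularProfile a m) t| ≤ a * m := by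
  rw [deriv_triangularProfile, abs_mul, abs_of_nonneg ha]
  have hm : 0 ≤ m := by linarith [ht.1, ht.2]
  have hdist : |t - m| ≤ m := abs_sub_le_iff.mpr ⟨by linarith [ht.2], by linarith [ht.1]⟩
  exact mul_le_mul_of_nonneg_left (abs_sub_le_of_nonneg_of_le hm le_rfl (abs_nonneg _) hdist) ha

theorem abs_deriv_triangularProfile_sub_le (ha : 0 ≤ a) (s t : ℝ) :
    |deriv (triangularProfile a m) s - deriv (triangularProfile a m) t| ≤ a * |s - t| := by
  rw [deriv_triangularProfile, deriv_triangularProfile, ← mul_sub, sub_sub_sub_cancel_left]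
  calc |a * (|t - m| - |s - m|)| = a * |(|t - m| - |s - m|)| := by rw [abs_mul, abs_of_nonneg ha]
    _ ≤ a * |(t - m) - (s - m)| :=
      mul_le_mul_of_nonneg_left (abs_abs_sub_abs_le_abs_sub _ _) ha
    _ = a * |s - t| := by rw [sub_sub_sub_cancel_right, abs_sub_comm]

end triangularProfile

theorem stmt_16 (a_max V_max d : ℝ) (ha : 0 < a_max) (hV : 0 < V_max)
    (hd : 0 < d) (hd2 : d ≤ V_max ^ 2 / a_max) :
    ∃ q : ℝ → ℝ, Differentiable ℝ q ∧
      q 0 = 0 ∧ q (2 * Real.sqrt (d / a_max)) = d ∧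
      deriv q 0 = 0 ∧ deriv q (2 * Real.sqrt (d / a_max)) = 0 ∧
      (∀ t ∈ Set.Icc (0 : ℝ) (2 * Real.sqrt (d / a_max)), |deriv q t| ≤ V_max) ∧
      (∀ s ∈ Set.Icc (0 : ℝ) (2 * Real.sqrt (d / a_max)),
        ∀ t ∈ Set.Icc (0 : ℝ) (2 * Real.sqrt (d / a_max)),
          |deriv q s - deriv q t| ≤ a_max * |s - t|) := by
  set m := Real.sqrt (d / a_max)
  have hm : 0 ≤ m := Real.sqrt_nonneg _
  have hm_sq : a_max * m ^ 2 = d := by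
    rw [Real.sq_sqrt (div_nonneg hd.le ha.le)]
    field_simp
  have h_peak : a_max * m ≤ V_max := by
    refine (pow_le_pow_iff_left₀ (by positivity) hV.le two_ne_zero).mp ?_
    rw [mul_pow, sq a_max, mul_assoc, hm_sq]
    exact (le_div_iff₀' ha).mp hd2
  refine ⟨triangularProfile a_max m, differentiable_triangularProfile a_max m,
    triangularProfile_zero hm, (triangularProfile_two_mul hm).trans hm_sq,
    deriv_triangularProfile_zero hm, deriv_triangularProfile_two_mul hm,
    fun t ht => (abs_deriv_triangularProfile_le ha.le ht).trans h_peak,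
    fun s _ t _ => abs_deriv_triangularProfile_sub_le ha.le s t⟩
end

section
/- Let a_max > 0, V_max > 0 and d ≥ V_max²/a_max, and set T = d/V_max + V_max/a_max. Then there exists a differentiable function q : ℝ → ℝ such that q(0) = 0, q(T) = d, q′(0) = 0, q′(T) = 0, |q′(t)| ≤ V_max for all t ∈ [0, T], and q′ is Lipschitz on [0, T] with Lipschitz constant a_max. -/
theorem stmt_17 (a_max V_max d : ℝ) (ha : 0 < a_max) (hV : 0 < V_max)
    (hd : V_max ^ 2 / a_max ≤ d) :
    ∃ q : ℝ → ℝ, Differentiable ℝ q ∧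
      q 0 = 0 ∧ q (d / V_max + V_max / a_max) = d ∧
      deriv q 0 = 0 ∧ deriv q (d / V_max + V_max / a_max) = 0 ∧
      (∀ t ∈ Set.Icc (0 : ℝ) (d / V_max + V_max / a_max), |deriv q t| ≤ V_max) ∧
      (∀ s ∈ Set.Icc (0 : ℝ) (d / V_max + V_max / a_max),
        ∀ t ∈ Set.Icc (0 : ℝ) (d / V_max + V_max / a_max),
          |deriv q s - deriv q t| ≤ a_max * |s - t|) := by
  set T : ℝ := d / V_max + V_max / a_max with hT
  set τ : ℝ := V_max / a_max with hτ
  have hτpos : 0 < τ := div_pos hV ha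
  have hdpos : 0 < d := lt_of_lt_of_le (by positivity) hd
  have hdV : V_max / a_max ≤ d / V_max := by
    rw [div_le_div_iff₀ ha hV]
    calc V_max * V_max = V_max ^ 2 := (sq V_max).symm
    _ = V_max ^ 2 / a_max * a_max := by field_simp
    _ ≤ d * a_max := by exact mul_le_mul_of_nonneg_right hd ha.le
  have h2τ : 2 * τ ≤ T := by
    rw [hT, hτ]; linarith
  have hτT : τ ≤ T - τ := by linarith
  set v : ℝ → ℝ := fun t => max 0 (min (min (a_max * t) V_max) (a_max * (T - t))) with hv
  have hvcont : Continuous v := by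
    apply continuous_const.max
    exact ((continuous_const.mul continuous_id).min continuous_const).min
      (continuous_const.mul (continuous_const.sub continuous_id))
  refine ⟨fun t => ∫ x in (0:ℝ)..t, v x, ?_, ?_, ?_, ?_, ?_, ?_, ?_⟩
  · exact fun b => ((hvcont.integral_hasStrictDerivAt 0 b).hasDerivAt).differentiableAt
  · simp
  · -- integral equals d
    have hint : ∀ a b : ℝ, IntervalIntegrable v MeasureTheory.volume a b :=
      fun a b => hvcont.intervalIntegrable a b
    have hsplit : (∫ x in (0:ℝ)..τ, v x) + (∫ x in τ..(T-τ), v x) + (∫ x in (T-τ)..T, v x)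
        = ∫ x in (0:ℝ)..T, v x := by
      rw [intervalIntegral.integral_add_adjacent_intervals (hint 0 τ) (hint τ (T-τ)),
        intervalIntegral.integral_add_adjacent_intervals (hint 0 (T-τ)) (hint (T-τ) T)]
    have h1 : (∫ x in (0:ℝ)..τ, v x) = ∫ x in (0:ℝ)..τ, a_max * x := by
      apply intervalIntegral.integral_congr
      intro x hx
      rw [Set.uIcc_of_le hτpos.le] at hx
      obtain ⟨hx0, hxτ⟩ := hx
      have h1 : a_max * x ≤ V_max := by
        have := mul_le_mul_of_nonneg_left hxτ ha.le
        rwa [hτ, mul_div_cancel₀ _ ha.ne'] at this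
      have h2 : a_max * x ≤ a_max * (T - x) := by
        apply mul_le_mul_of_nonneg_left _ ha.le
        linarith
      simp only [hv]
      rw [min_eq_left h1, min_eq_left h2, max_eq_right (by positivity)]
    have h2 : (∫ x in τ..(T-τ), v x) = ∫ x in τ..(T-τ), V_max := by
      apply intervalIntegral.integral_congr
      intro x hx
      rw [Set.uIcc_of_le hτT] at hx
      obtain ⟨hx1, hx2⟩ := hx
      have haτ : a_max * τ = V_max := by rw [hτ]; field_simp
      have h1 : V_max ≤ a_max * x := by
        rw [← haτ]; exact mul_le_mul_of_nonneg_left hx1 ha.le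
      have h2 : V_max ≤ a_max * (T - x) := by
        rw [← haτ]; exact mul_le_mul_of_nonneg_left (by linarith) ha.le
      simp only [hv]
      rw [min_eq_right h1, min_eq_left h2, max_eq_right hV.le]
    have h3 : (∫ x in (T-τ)..T, v x) = ∫ x in (T-τ)..T, a_max * (T - x) := by
      apply intervalIntegral.integral_congr
      intro x hx
      rw [Set.uIcc_of_le (by linarith)] at hx
      obtain ⟨hx1, hx2⟩ := hx
      have haτ : a_max * τ = V_max := by rw [hτ]; field_simp
      have h1 : a_max * (T - x) ≤ V_max := by
        rw [← haτ]; exact mul_le_mul_of_nonneg_left (by linarith) ha.le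
      have h2 : a_max * (T - x) ≤ a_max * x := by
        apply mul_le_mul_of_nonneg_left _ ha.le
        linarith
      have h0 : 0 ≤ a_max * (T - x) := by
        apply mul_nonneg ha.le; linarith
      simp only [hv]
      rw [min_eq_right (le_min h2 h1), max_eq_right h0]
    show (∫ x in (0:ℝ)..T, v x) = d
    rw [← hsplit, h1, h2, h3]
    have haτ : a_max * τ = V_max := by rw [hτ]; field_simp
    have e1 : (∫ x in (0:ℝ)..τ, a_max * x) = a_max * ((τ^2 - 0^2)/2) := by
      rw [intervalIntegral.integral_const_mul, integral_id]
    have e2 : (∫ x in τ..(T-τ), (V_max:ℝ)) = V_max * (T - τ - τ) := by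
      rw [intervalIntegral.integral_const, smul_eq_mul]; ring
    have e3 : (∫ x in (T-τ)..T, a_max * (T - x))
        = a_max * T * (T - (T - τ)) - a_max * ((T^2 - (T-τ)^2)/2) := by
      have : (fun x : ℝ => a_max * (T - x)) = fun x : ℝ => a_max * T - a_max * x := by
        funext x; ring
      rw [this, intervalIntegral.integral_sub (continuous_const.intervalIntegrable _ _)
        ((by fun_prop : Continuous fun x : ℝ => a_max * x).intervalIntegrable _ _),
        intervalIntegral.integral_const, intervalIntegral.integral_const_mul, integral_id,
        smul_eq_mul]
      ring
    rw [e1, e2, e3]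
    have hTd : T - τ = d / V_max := by rw [hT]; ring
    have hTτ : V_max * (T - τ) = d := by rw [hTd, mul_div_cancel₀ _ hV.ne']
    linear_combination τ * haτ + hTτ
  · rw [Continuous.deriv_integral v hvcont 0]
    have hT0 : 0 ≤ T := by nlinarith
    simp only [hv]
    rw [mul_zero, sub_zero, min_eq_left hV.le, min_eq_left (by positivity), max_self]
  · rw [Continuous.deriv_integral v hvcont 0]
    simp only [hv]
    rw [sub_self, mul_zero, max_eq_left (min_le_right _ 0)]
  · intro t _
    rw [Continuous.deriv_integral v hvcont 0]
    have h0 : (0:ℝ) ≤ v t := le_max_left _ _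
    rw [abs_of_nonneg h0]
    exact max_le hV.le (le_trans (min_le_left _ _) (min_le_right _ _))
  · intro s _ t _
    rw [Continuous.deriv_integral v hvcont 0, Continuous.deriv_integral v hvcont 0]
    simp only [hv]
    set ms := min (min (a_max * s) V_max) (a_max * (T - s))
    set mt := min (min (a_max * t) V_max) (a_max * (T - t))
    have key : |max 0 ms - max 0 mt| ≤ |ms - mt| := by
      simpa using abs_max_sub_max_le_max 0 ms 0 mt
    refine key.trans ?_
    have step1 : |min (a_max * s) V_max - min (a_max * t) V_max| ≤ a_max * |s - t| := by
      refine le_trans (by simpa using abs_min_sub_min_le_max (a_max*s) V_max (a_max*t) V_max) ?_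
      rw [← mul_sub, abs_mul, abs_of_pos ha]
    have step2 : |a_max * (T - s) - a_max * (T - t)| ≤ a_max * |s - t| := by
      rw [← mul_sub, abs_mul, abs_of_pos ha]
      have : T - s - (T - t) = -(s - t) := by ring
      rw [this, abs_neg]
    refine le_trans (abs_min_sub_min_le_max _ _ _ _) (max_le step1 step2)
end
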